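/- arXiv:2410.00212 — 2 statements merged into one kernel-verified Lean document; each statement's English description precedes it below -/
import Mathlib

section
/- With the same Gibbs measure μ and notation as for the first-order map, the vector field φ₂(q,p) = (0, -½ β (F(q)ᵀM⁻¹p) F(q)) solves ∇*φ₂ = -½ (∇*)² : (φ₁ ⊗ φ₁), where φ₁(q,p) = (0, F(q)). Explicitly, -½ Σ_{i,j} ∂*_{p_i}∂*_{p_j}(F_i(q)F_j(q)) = -½ (β pᵀM⁻¹F(q))² + ½ β F(q)ᵀM⁻¹F(q), and this equals ∇*φ₂ for the given φ₂. -/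
/-!
Every function to which `∂*_{p_i}` is applied here is affine in `p`, so `∂_{p_i}` only extracts
the coefficient of `p_i` and `∂*_{p_i}` acts as an explicit algebraic operator. Both sides of
the identity then collapse to the quadratic forms `(β (M⁻¹p) · F)²` and `β F · M⁻¹F`; the double
sum `Σ_{i,j} (M⁻¹)_{ji} F_i F_j` is `F · M⁻¹F` after relabelling.
-/

/-- `∂*_{p_i} = -∂_{p_i} + β (M⁻¹p)_i`, the `L²(μ)`-adjoint of `∂_{p_i}`. -/
noncomputable def adjP {d : ℕ} (β : ℝ) (Minv : Matrix (Fin d) (Fin d) ℝ) (i : Fin d)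
    (ψ : (Fin d → ℝ) → (Fin d → ℝ) → ℝ) : (Fin d → ℝ) → (Fin d → ℝ) → ℝ :=
  fun q p => -(fderiv ℝ (fun p' => ψ q p') p (Pi.single i 1)) + β * Minv.mulVec p i * ψ q p

open Matrix

theorem fderiv_dotProduct {n : Type*} [Fintype n] (u p v : n → ℝ) :
    fderiv ℝ (dotProduct u) p v = u ⬝ᵥ v :=
  congrArg (· v) (LinearMap.toContinuousLinearMap (dotProductBilin ℝ ℝ u)).fderiv

section

variable {d : ℕ} (β : ℝ) (A : Matrix (Fin d) (Fin d) ℝ)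

theorem adjP_of_affine {ψ : (Fin d → ℝ) → (Fin d → ℝ) → ℝ} {a : (Fin d → ℝ) → ℝ}
    {u : (Fin d → ℝ) → (Fin d → ℝ)} (hψ : ∀ q p, ψ q p = a q + u q ⬝ᵥ p)
    (i : Fin d) (q p : Fin d → ℝ) :
    adjP β A i ψ q p = -u q i + β * (A *ᵥ p) i * ψ q p := by
  simp only [adjP, hψ, fderiv_const_add, fderiv_dotProduct, dotProduct_single, mul_one]

theorem adjP_adjP_of_momentum_free (c : (Fin d → ℝ) → ℝ) (i j : Fin d) (q p : Fin d → ℝ) :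
    adjP β A i (adjP β A j fun q' _ => c q') q p
      = (β ^ 2 * (A *ᵥ p) i * (A *ᵥ p) j - β * A j i) * c q := by
  have hinner (q p) : adjP β A j (fun q' _ => c q') q p = 0 + (β * c q) • A j ⬝ᵥ p := by
    rw [adjP_of_affine β A (a := c) (u := 0) fun _ _ => by simp, smul_dotProduct]
    simp only [Pi.zero_apply, neg_zero, zero_add, smul_eq_mul]
    exact mul_right_comm _ _ _
  rw [adjP_of_affine β A hinner, hinner, zero_add, smul_dotProduct, Pi.smul_apply, smul_eq_mul]
  change _ + _ * (_ * (A *ᵥ p) j) = _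
  ring

theorem sum_adjP_adjP_mul (F : (Fin d → ℝ) → Fin d → ℝ) (q p : Fin d → ℝ) :
    ∑ i, ∑ j, adjP β A i (adjP β A j fun q' _ => F q' i * F q' j) q p
      = (β * (A *ᵥ p) ⬝ᵥ F q) ^ 2 - β * F q ⬝ᵥ A *ᵥ F q := by
  rw [dot_mulVec_eq_sum_sum, sq, dotProduct, Finset.mul_sum, Finset.sum_mul_sum, Finset.mul_sum,
    ← Finset.sum_sub_distrib]
  simp only [adjP_adjP_of_momentum_free, Finset.mul_sum, ← Finset.sum_sub_distrib]
  exact Finset.sum_congr rfl fun i _ => Finset.sum_congr rfl fun j _ => by ring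

/-- The momentum component of `φ₂`. -/
noncomputable def secondOrderField (F : (Fin d → ℝ) → Fin d → ℝ) (q p : Fin d → ℝ) : Fin d → ℝ :=
  fun i => -(1 / 2) * β * (F q ⬝ᵥ A *ᵥ p) * F q i

theorem sum_adjP_secondOrderField (F : (Fin d → ℝ) → Fin d → ℝ) (q p : Fin d → ℝ) :
    ∑ i, adjP β A i (fun q' p' => secondOrderField β A F q' p' i) q p
      = (1 / 2) * β * F q ⬝ᵥ A *ᵥ F q - (1 / 2) * (β * (A *ᵥ p) ⬝ᵥ F q) ^ 2 := by
  have hlin (i) (q p) : secondOrderField β A F q p i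
      = 0 + (-(1 / 2) * β * F q i) • (F q ᵥ* A) ⬝ᵥ p := by
    rw [zero_add, smul_dotProduct, ← dotProduct_mulVec, smul_eq_mul, secondOrderField]
    ring
  simp only [adjP_of_affine β A (hlin _), Finset.sum_add_distrib]
  have hdiv : ∑ i, -((-(1 / 2) * β * F q i) • F q ᵥ* A) i = (1 / 2) * β * F q ⬝ᵥ F q ᵥ* A := by
    simp only [dotProduct, Finset.mul_sum, Pi.smul_apply, smul_eq_mul]
    exact Finset.sum_congr rfl fun i _ => by ring
  have hmul : ∑ i, β * (A *ᵥ p) i * secondOrderField β A F q p i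
      = -(1 / 2) * β ^ 2 * (F q ⬝ᵥ A *ᵥ p) * ((A *ᵥ p) ⬝ᵥ F q) :=
    calc _ = ∑ i, -(1 / 2) * β ^ 2 * (F q ⬝ᵥ A *ᵥ p) * ((A *ᵥ p) i * F q i) :=
          Finset.sum_congr rfl fun i _ => by rw [secondOrderField]; ring
      _ = _ := (Finset.mul_sum ..).symm
  rw [hdiv, hmul, dotProduct_comm (F q) (A *ᵥ p), dotProduct_mulVec (F q) A (F q),
    dotProduct_comm (F q ᵥ* A)]
  ring

end

theorem stmt5_general {d : ℕ} (β : ℝ)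
    (F : (Fin d → ℝ) → (Fin d → ℝ)) (Minv : Matrix (Fin d) (Fin d) ℝ)
    (φ2p : (Fin d → ℝ) → (Fin d → ℝ) → (Fin d → ℝ))
    (hφ2p : ∀ q p, φ2p q p = fun i => -(1/2) * β * (∑ j, F q j * Minv.mulVec p j) * F q i) :
    ∀ q p : Fin d → ℝ,
      (-(1/2) * ∑ i, ∑ j, adjP β Minv i (adjP β Minv j (fun q' _ => F q' i * F q' j)) q p
        = -(1/2) * (β * ∑ i, Minv.mulVec p i * F q i) ^ 2
          + (1/2) * β * ∑ i, F q i * Minv.mulVec (F q) i)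
      ∧ (∑ i, adjP β Minv i (fun q' p' => φ2p q' p' i) q p
        = -(1/2) * ∑ i, ∑ j, adjP β Minv i (adjP β Minv j (fun q' _ => F q' i * F q' j)) q p) := by
  intro q p
  obtain rfl : φ2p = secondOrderField β Minv F := funext₂ hφ2p
  have htensor := sum_adjP_adjP_mul β Minv F q p
  have hfield := sum_adjP_secondOrderField β Minv F q p
  simp only [dotProduct] at htensor hfield
  constructor <;> linarith

/-- For the Gibbs measure `μ ∝ exp(-β(V(q) + pᵀM⁻¹p/2))` and `φ₁(q,p) = (0, F(q))`,
the field `φ₂(q,p) = (0, -½ β (F(q)ᵀM⁻¹p) F(q))` solves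
`∇*φ₂ = -½ (∇*)² : (φ₁ ⊗ φ₁)`. Explicitly,
`-½ Σ_{i,j} ∂*_{p_i}∂*_{p_j}(F_i F_j) = -½ (β pᵀM⁻¹F(q))² + ½ β F(q)ᵀM⁻¹F(q)`,
and this equals `∇*φ₂` for the given `φ₂`. -/
theorem stmt5 {d : ℕ} (β : ℝ) (hβ : 0 < β) (V : (Fin d → ℝ) → ℝ)
    (F : (Fin d → ℝ) → (Fin d → ℝ)) (M Minv : Matrix (Fin d) (Fin d) ℝ)
    (hM : M.PosDef) (hMinv : Minv = M⁻¹)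
    (φ2p : (Fin d → ℝ) → (Fin d → ℝ) → (Fin d → ℝ))
    (hφ2p : ∀ q p, φ2p q p = fun i => -(1/2) * β * (∑ j, F q j * Minv.mulVec p j) * F q i) :
    ∀ q p : Fin d → ℝ,
      (-(1/2) * ∑ i, ∑ j, adjP β Minv i (adjP β Minv j (fun q' _ => F q' i * F q' j)) q p
        = -(1/2) * (β * ∑ i, Minv.mulVec p i * F q i) ^ 2
          + (1/2) * β * ∑ i, F q i * Minv.mulVec (F q) i)
      ∧ (∑ i, adjP β Minv i (fun q' p' => φ2p q' p' i) q p
        = -(1/2) * ∑ i, ∑ j, adjP β Minv i (adjP β Minv j (fun q' _ => F q' i * F q' j)) q p) :=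
  stmt5_general β F Minv φ2p hφ2p
end

section
/- Let γ : ℝ → ℝ be a standard Gaussian density with variance 1/β, i.e., γ(p) = sqrt(β/(2π)) exp(-βp²/2), and let T_η(p) = p + η - η²βp/2. Then for any bounded smooth test function g : ℝ → ℝ, ∫ g(T_η(p)) γ(p) dp = ∫ g(p)(1 + ηβp) γ(p) dp + O(η²) as η → 0, but if instead T_η(p) = p + η (first-order map), the same expansion holds with remainder O(η²) as well, while the second-order map improves the remainder to O(η³) when g has bounded third derivative. -/
set_option maxHeartbeats 1000000
open MeasureTheory Real Filter Set Topology

-- integrability of |x|^k * exp(-b x^2)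
lemma abs_pow_exp_integrable {b : ℝ} (hb : 0 < b) (k : ℕ) :
    Integrable fun x : ℝ => |x| ^ k * Real.exp (-b * x ^ 2) := by
  have h : Integrable fun x : ℝ => x ^ (k : ℝ) * Real.exp (-b * x ^ 2) :=
    integrable_rpow_mul_exp_neg_mul_sq hb (by exact_mod_cast neg_one_lt_zero.trans_le (Nat.cast_nonneg k))
  refine h.abs.congr (Filter.Eventually.of_forall fun x => ?_)
  simp only [abs_mul, abs_of_pos (Real.exp_pos _), Real.rpow_natCast, abs_pow]

lemma gauss_integrable {β : ℝ} (hβ : 0 < β) (c : ℝ) {f : ℝ → ℝ} (hf : Continuous f)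
    (C : ℝ) (k : ℕ) (hfb : ∀ p, |f p| ≤ C * (1 + |p|) ^ k) :
    Integrable fun p => f p * (c * Real.exp (-β * p ^ 2 / 2)) := by
  have h2 : 0 < β / 2 := half_pos hβ
  have hbin : Integrable fun x : ℝ => (1 + |x|) ^ k * Real.exp (-(β/2) * x ^ 2) := by
    have heq : (fun x : ℝ => (1 + |x|) ^ k * Real.exp (-(β/2) * x ^ 2))
        = fun x : ℝ => ∑ m ∈ Finset.range (k+1),
            (k.choose m : ℝ) * (|x| ^ (k - m) * Real.exp (-(β/2) * x ^ 2)) := by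
      funext x
      rw [add_pow, Finset.sum_mul]
      refine Finset.sum_congr rfl fun m _ => ?_
      ring
    rw [heq]
    exact integrable_finset_sum _ fun m _ => (abs_pow_exp_integrable h2 (k - m)).const_mul _
  have hmaj : Integrable fun x : ℝ => (|C| * |c|) * ((1 + |x|) ^ k * Real.exp (-(β/2) * x ^ 2)) :=
    hbin.const_mul _
  refine hmaj.mono' ((hf.mul (continuous_const.mul
    (Real.continuous_exp.comp (by continuity)))).aestronglyMeasurable)
    (Filter.Eventually.of_forall fun p => ?_)
  have hexp : Real.exp (-β * p ^ 2 / 2) = Real.exp (-(β/2) * p ^ 2) := by ring_nf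
  rw [Real.norm_eq_abs, abs_mul, abs_mul, abs_of_pos (Real.exp_pos _), hexp]
  have h1 : |f p| ≤ |C| * (1 + |p|) ^ k :=
    (hfb p).trans (mul_le_mul_of_nonneg_right (le_abs_self C) (by positivity))
  calc |f p| * (|c| * Real.exp (-(β/2) * p ^ 2))
      ≤ (|C| * (1 + |p|) ^ k) * (|c| * Real.exp (-(β/2) * p ^ 2)) := by
        apply mul_le_mul_of_nonneg_right h1 (by positivity)
    _ = (|C| * |c|) * ((1 + |p|) ^ k * Real.exp (-(β/2) * p ^ 2)) := by ring

lemma gauss_hasDerivAt (β c : ℝ) (p : ℝ) :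
    HasDerivAt (fun p : ℝ => c * Real.exp (-β * p ^ 2 / 2))
      (-(β * p) * (c * Real.exp (-β * p ^ 2 / 2))) p := by
  have h1 : HasDerivAt (fun p : ℝ => -β * p ^ 2 / 2) (-(β * p)) p := by
    have h := (hasDerivAt_pow 2 p).const_mul (-β / 2)
    have h2 : (fun y : ℝ => -β / 2 * y ^ 2) = fun y : ℝ => -β * y ^ 2 / 2 := by
      funext y; ring
    rw [h2] at h
    refine h.congr_deriv ?_
    push_cast
    ring
  have := (h1.exp).const_mul c
  refine this.congr_deriv ?_
  ring

lemma gauss_tendsto_atTop {β : ℝ} (hβ : 0 < β) (c : ℝ) :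
    Tendsto (fun p : ℝ => c * Real.exp (-β * p ^ 2 / 2)) atTop (𝓝 0) := by
  have h1 : Tendsto (fun p : ℝ => -β * p ^ 2 / 2) atTop atBot := by
    have hp : Tendsto (fun p : ℝ => p ^ 2) atTop atTop :=
      tendsto_pow_atTop two_ne_zero
    have h2 := (tendsto_const_mul_atBot_of_neg (l := atTop)
      (f := fun p : ℝ => p ^ 2) (show -β/2 < 0 by linarith)).2 hp
    refine h2.congr fun p => by ring
  have := (Real.tendsto_exp_atBot.comp h1).const_mul c
  simpa [Function.comp] using this

lemma gauss_tendsto_atBot {β : ℝ} (hβ : 0 < β) (c : ℝ) :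
    Tendsto (fun p : ℝ => c * Real.exp (-β * p ^ 2 / 2)) atBot (𝓝 0) := by
  have hp : Tendsto (fun p : ℝ => p ^ 2) atBot atTop := by
    have habs : Tendsto (fun p : ℝ => |p|) atBot atTop := tendsto_abs_atBot_atTop
    have h0 : Tendsto (fun p : ℝ => |p| ^ 2) atBot atTop :=
      (tendsto_pow_atTop (n := 2) two_ne_zero).comp habs
    refine h0.congr fun p => sq_abs p
  have h1 : Tendsto (fun p : ℝ => -β * p ^ 2 / 2) atBot atBot := by
    have h2 := (tendsto_const_mul_atBot_of_neg (l := atBot)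
      (f := fun p : ℝ => p ^ 2) (show -β/2 < 0 by linarith)).2 hp
    refine h2.congr fun p => by ring
  have := (Real.tendsto_exp_atBot.comp h1).const_mul c
  simpa [Function.comp] using this

lemma gauss_ibp {β : ℝ} (hβ : 0 < β) {c : ℝ} (hc : 0 ≤ c) {f : ℝ → ℝ}
    (hfd : Differentiable ℝ f) (hfc : Continuous (deriv f))
    {Cf Cf' : ℝ} (hfb : ∀ p, |f p| ≤ Cf) (hf'b : ∀ p, |deriv f p| ≤ Cf') :
    ∫ p, deriv f p * (c * Real.exp (-β * p ^ 2 / 2))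
      = β * ∫ p, p * f p * (c * Real.exp (-β * p ^ 2 / 2)) := by
  set G : ℝ → ℝ := fun p => c * Real.exp (-β * p ^ 2 / 2) with hG
  have hCf : 0 ≤ Cf := le_trans (abs_nonneg _) (hfb 0)
  have hGpos : ∀ p, 0 ≤ G p := fun p => mul_nonneg hc (Real.exp_pos _).le
  have hGle : ∀ p, G p ≤ c := fun p => by
    have := Real.exp_le_one_iff.2 (by nlinarith [sq_nonneg p] : -β * p ^ 2 / 2 ≤ 0)
    calc G p = c * Real.exp (-β * p ^ 2 / 2) := rfl
      _ ≤ c * 1 := by apply mul_le_mul_of_nonneg_left this hc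
      _ = c := mul_one c
  -- integrability of the two pieces
  have hI1 : Integrable fun p => deriv f p * G p := by
    refine gauss_integrable hβ c hfc Cf' 0 fun p => ?_
    simpa using hf'b p
  have hI2 : Integrable fun p => p * f p * G p := by
    refine gauss_integrable hβ c (continuous_id.mul hfd.continuous) Cf 1 fun p => ?_
    rw [abs_mul]
    calc |p| * |f p| ≤ |p| * Cf := by
          exact mul_le_mul_of_nonneg_left (hfb p) (abs_nonneg _)
      _ = Cf * |p| := mul_comm _ _
      _ ≤ Cf * (1 + |p|) ^ 1 := by
          apply mul_le_mul_of_nonneg_left _ hCf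
          rw [pow_one]; linarith [abs_nonneg p]
  have hIF' : Integrable fun p => deriv f p * G p - β * (p * f p * G p) :=
    hI1.sub (hI2.const_mul β)
  -- F and its derivative
  have hder : ∀ p : ℝ, HasDerivAt (fun q => f q * G q)
      (deriv f p * G p - β * (p * f p * G p)) p := by
    intro p
    have := ((hfd p).hasDerivAt).mul (gauss_hasDerivAt β c p)
    refine this.congr_deriv ?_
    simp only [hG]
    ring
  -- limits at ±∞
  have htop : Tendsto (fun p => f p * G p) atTop (𝓝 0) := by
    apply squeeze_zero_norm (a := fun p => Cf * G p)
    · intro p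
      rw [Real.norm_eq_abs, abs_mul, abs_of_nonneg (hGpos p)]
      exact mul_le_mul_of_nonneg_right (hfb p) (hGpos p)
    · simpa only [mul_zero] using (gauss_tendsto_atTop hβ c).const_mul Cf
  have hbot : Tendsto (fun p => f p * G p) atBot (𝓝 0) := by
    apply squeeze_zero_norm (a := fun p => Cf * G p)
    · intro p
      rw [Real.norm_eq_abs, abs_mul, abs_of_nonneg (hGpos p)]
      exact mul_le_mul_of_nonneg_right (hfb p) (hGpos p)
    · simpa only [mul_zero] using (gauss_tendsto_atBot hβ c).const_mul Cf
  have h1 : (∫ p in Iic (0:ℝ), (deriv f p * G p - β * (p * f p * G p)))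
      = f 0 * G 0 - 0 :=
    integral_Iic_of_hasDerivAt_of_tendsto' (fun x _ => hder x) hIF'.integrableOn hbot
  have h2 : (∫ p in Ioi (0:ℝ), (deriv f p * G p - β * (p * f p * G p)))
      = 0 - f 0 * G 0 :=
    integral_Ioi_of_hasDerivAt_of_tendsto' (fun x _ => hder x) hIF'.integrableOn htop
  have h3 : (∫ p, (deriv f p * G p - β * (p * f p * G p))) = 0 := by
    rw [← intervalIntegral.integral_Iic_add_Ioi hIF'.integrableOn hIF'.integrableOn, h1, h2]
    ring
  rw [integral_sub hI1 (hI2.const_mul β), integral_const_mul] at h3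
  linarith

lemma lip_of_deriv {f : ℝ → ℝ} (hf : Differentiable ℝ f) {M : ℝ}
    (hM : ∀ x, |deriv f x| ≤ M) (x y : ℝ) : |f y - f x| ≤ M * |y - x| := by
  have := Convex.norm_image_sub_le_of_norm_deriv_le (s := Set.univ)
    (fun z _ => hf z) (fun z _ => hM z) convex_univ (mem_univ x) (mem_univ y)
  simpa using this

lemma taylor_one {f : ℝ → ℝ} (hf : Differentiable ℝ f) (hf' : Differentiable ℝ (deriv f))
    {M : ℝ} (hM : ∀ x, |deriv (deriv f) x| ≤ M) (x h : ℝ) :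
    |f (x + h) - f x - h * deriv f x| ≤ M * h ^ 2 := by
  set u : ℝ → ℝ := fun t => f (x + t) - t * deriv f x with hu
  have hud : ∀ t : ℝ, HasDerivAt u (deriv f (x + t) - deriv f x) t := by
    intro t
    have h1 : HasDerivAt (fun t : ℝ => f (x + t)) (deriv f (x + t)) t := by
      have := HasDerivAt.comp t ((hf (x + t)).hasDerivAt) ((hasDerivAt_id t).const_add x)
      exact this.congr_deriv (mul_one _)
    exact h1.sub (hasDerivAt_mul_const (deriv f x))
  have hM0 : 0 ≤ M := le_trans (abs_nonneg _) (hM x)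
  have key := Convex.norm_image_sub_le_of_norm_hasDerivWithin_le
    (s := Icc (-|h|) |h|) (f := u) (f' := fun t => deriv f (x + t) - deriv f x)
    (C := M * |h|)
    (fun t _ => (hud t).hasDerivWithinAt)
    (fun t ht => by
      have h1 : |deriv f (x + t) - deriv f x| ≤ M * |t| := by
        have := lip_of_deriv hf' hM x (x + t)
        simpa using this
      have h2 : |t| ≤ |h| := abs_le.2 ⟨ht.1, ht.2⟩
      calc ‖deriv f (x + t) - deriv f x‖ = |deriv f (x + t) - deriv f x| := rfl
        _ ≤ M * |t| := h1
        _ ≤ M * |h| := mul_le_mul_of_nonneg_left h2 hM0)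
    (convex_Icc _ _)
    (⟨neg_nonpos.2 (abs_nonneg h), abs_nonneg h⟩)
    (⟨neg_abs_le h, le_abs_self h⟩)
  have : |u h - u 0| ≤ M * |h| * |h - 0| := key
  have h3 : u h - u 0 = f (x + h) - f x - h * deriv f x := by simp [hu]; ring
  rw [h3] at this
  calc |f (x + h) - f x - h * deriv f x| ≤ M * |h| * |h - 0| := this
    _ = M * h ^ 2 := by rw [sub_zero, ← sq_abs h]; ring

lemma taylor_two {f : ℝ → ℝ} (hf : Differentiable ℝ f) (hf' : Differentiable ℝ (deriv f))
    (hf'' : Differentiable ℝ (deriv (deriv f)))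
    {M : ℝ} (hM : ∀ x, |deriv (deriv (deriv f)) x| ≤ M) (x h : ℝ) :
    |f (x + h) - f x - h * deriv f x - h ^ 2 / 2 * deriv (deriv f) x| ≤ M * |h| ^ 3 := by
  set v : ℝ → ℝ := fun t => f (x + t) - t * deriv f x - t ^ 2 / 2 * deriv (deriv f) x with hv
  have hvd : ∀ t : ℝ, HasDerivAt v
      (deriv f (x + t) - deriv f x - t * deriv (deriv f) x) t := by
    intro t
    have h1 : HasDerivAt (fun t : ℝ => f (x + t)) (deriv f (x + t)) t := by
      have := HasDerivAt.comp t ((hf (x + t)).hasDerivAt) ((hasDerivAt_id t).const_add x)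
      exact this.congr_deriv (mul_one _)
    have h2 : HasDerivAt (fun t : ℝ => t ^ 2 / 2 * deriv (deriv f) x)
        (t * deriv (deriv f) x) t := by
      have := (hasDerivAt_pow 2 t).div_const 2 |>.mul_const (deriv (deriv f) x)
      refine this.congr_deriv ?_
      push_cast; ring
    exact (h1.sub (hasDerivAt_mul_const (deriv f x))).sub h2
  have hM0 : 0 ≤ M := le_trans (abs_nonneg _) (hM x)
  have key := Convex.norm_image_sub_le_of_norm_hasDerivWithin_le
    (s := Icc (-|h|) |h|) (f := v)
    (f' := fun t => deriv f (x + t) - deriv f x - t * deriv (deriv f) x)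
    (C := M * h ^ 2)
    (fun t _ => (hvd t).hasDerivWithinAt)
    (fun t ht => by
      have h1 : |deriv f (x + t) - deriv f x - t * deriv (deriv f) x| ≤ M * t ^ 2 := by
        have := taylor_one hf' hf'' hM x t
        simpa using this
      have h2 : |t| ≤ |h| := abs_le.2 ⟨ht.1, ht.2⟩
      have h4 : t ^ 2 ≤ h ^ 2 := by
        rw [← sq_abs t, ← sq_abs h]
        exact pow_le_pow_left₀ (abs_nonneg t) h2 2
      calc ‖deriv f (x + t) - deriv f x - t * deriv (deriv f) x‖
          ≤ M * t ^ 2 := h1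
        _ ≤ M * h ^ 2 := mul_le_mul_of_nonneg_left h4 hM0)
    (convex_Icc _ _)
    (⟨neg_nonpos.2 (abs_nonneg h), abs_nonneg h⟩)
    (⟨neg_abs_le h, le_abs_self h⟩)
  have hkey : |v h - v 0| ≤ M * h ^ 2 * |h - 0| := key
  have h3 : v h - v 0 = f (x + h) - f x - h * deriv f x - h ^ 2 / 2 * deriv (deriv f) x := by
    simp [hv]; ring
  rw [h3] at hkey
  calc |f (x + h) - f x - h * deriv f x - h ^ 2 / 2 * deriv (deriv f) x|
      ≤ M * h ^ 2 * |h - 0| := hkey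
    _ = M * |h| ^ 3 := by rw [sub_zero, ← sq_abs h]; ring

lemma main_three {β : ℝ} (hβ : 0 < β) {c : ℝ} (hc : 0 ≤ c) {g : ℝ → ℝ}
    (hg : ContDiff ℝ (⊤ : ℕ∞) g) {M0 M1 M2 M3 : ℝ}
    (hM0 : ∀ p, |g p| ≤ M0) (hM1 : ∀ p, |deriv g p| ≤ M1)
    (hM2 : ∀ p, |deriv (deriv g) p| ≤ M2) (hM3 : ∀ p, |deriv (deriv (deriv g)) p| ≤ M3) :
    ∃ C : ℝ, 0 ≤ C ∧ ∀ η : ℝ, |η| ≤ 1 →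
      |(∫ p, g (p + η - η ^ 2 * β * p / 2) * (c * Real.exp (-β * p ^ 2 / 2)))
        - ∫ p, g p * (1 + η * β * p) * (c * Real.exp (-β * p ^ 2 / 2))| ≤ C * |η| ^ 3 := by
  have hgi : ContDiff ℝ ((⊤ : ℕ∞) : WithTop ℕ∞) g := hg.of_le (by simp)
  have hgd : Differentiable ℝ g := hgi.differentiable (by norm_num)
  have hg1 : ContDiff ℝ ((⊤ : ℕ∞) : WithTop ℕ∞) (deriv g) := (contDiff_infty_iff_deriv.mp hgi).2
  have hg1d : Differentiable ℝ (deriv g) := hg1.differentiable (by norm_num)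
  have hg2 : ContDiff ℝ ((⊤ : ℕ∞) : WithTop ℕ∞) (deriv (deriv g)) := (contDiff_infty_iff_deriv.mp hg1).2
  have hg2d : Differentiable ℝ (deriv (deriv g)) := hg2.differentiable (by norm_num)
  have hM0n : 0 ≤ M0 := le_trans (abs_nonneg _) (hM0 0)
  have hM1n : 0 ≤ M1 := le_trans (abs_nonneg _) (hM1 0)
  have hM2n : 0 ≤ M2 := le_trans (abs_nonneg _) (hM2 0)
  have hM3n : 0 ≤ M3 := le_trans (abs_nonneg _) (hM3 0)
  -- basic integrability
  have hIg : Integrable fun p => g p * (c * Real.exp (-β * p ^ 2 / 2)) :=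
    gauss_integrable hβ c hgi.continuous M0 0 fun p => by simpa using hM0 p
  have hIpg : Integrable fun p => p * g p * (c * Real.exp (-β * p ^ 2 / 2)) := by
    refine gauss_integrable hβ c (continuous_id.mul hgi.continuous) M0 1 fun p => ?_
    rw [abs_mul, pow_one]
    nlinarith [abs_nonneg p, abs_nonneg (g p), hM0 p, mul_le_mul_of_nonneg_left (hM0 p) (abs_nonneg p)]
  have hIg1 : Integrable fun p => deriv g p * (c * Real.exp (-β * p ^ 2 / 2)) :=
    gauss_integrable hβ c hg1.continuous M1 0 fun p => by simpa using hM1 p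
  have hIpg1 : Integrable fun p => p * deriv g p * (c * Real.exp (-β * p ^ 2 / 2)) := by
    refine gauss_integrable hβ c (continuous_id.mul hg1.continuous) M1 1 fun p => ?_
    rw [abs_mul, pow_one]
    nlinarith [abs_nonneg p, mul_le_mul_of_nonneg_left (hM1 p) (abs_nonneg p)]
  have hIg2 : Integrable fun p => deriv (deriv g) p * (c * Real.exp (-β * p ^ 2 / 2)) :=
    gauss_integrable hβ c hg2.continuous M2 0 fun p => by simpa using hM2 p
  have hIpg2 : Integrable fun p => p * deriv (deriv g) p * (c * Real.exp (-β * p ^ 2 / 2)) := by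
    refine gauss_integrable hβ c (continuous_id.mul hg2.continuous) M2 1 fun p => ?_
    rw [abs_mul, pow_one]
    nlinarith [abs_nonneg p, mul_le_mul_of_nonneg_left (hM2 p) (abs_nonneg p)]
  have hIp2g2 : Integrable fun p => p ^ 2 * deriv (deriv g) p * (c * Real.exp (-β * p ^ 2 / 2)) := by
    refine gauss_integrable hβ c ((continuous_pow 2).mul hg2.continuous) M2 2 fun p => ?_
    rw [abs_mul]
    have h2 : |p| ^ 2 ≤ (1 + |p|) ^ 2 := by nlinarith [abs_nonneg p]
    calc |p ^ 2| * |deriv (deriv g) p| ≤ |p ^ 2| * M2 :=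
          mul_le_mul_of_nonneg_left (hM2 p) (abs_nonneg _)
      _ = M2 * |p| ^ 2 := by rw [abs_pow]; ring
      _ ≤ M2 * (1 + |p|) ^ 2 := mul_le_mul_of_nonneg_left h2 hM2n
  have hIk : ∀ k : ℕ, Integrable fun p => (1 + |p|) ^ k * (c * Real.exp (-β * p ^ 2 / 2)) := by
    intro k
    refine gauss_integrable hβ c (by continuity) 1 k fun p => ?_
    rw [abs_of_nonneg (by positivity), one_mul]
  -- bound transfer
  have hbound : ∀ (f bnd : ℝ → ℝ),
      Integrable (fun p => f p * (c * Real.exp (-β * p ^ 2 / 2))) →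
      Integrable (fun p => bnd p * (c * Real.exp (-β * p ^ 2 / 2))) →
      (∀ p, |f p| ≤ bnd p) →
      |∫ p, f p * (c * Real.exp (-β * p ^ 2 / 2))|
        ≤ ∫ p, bnd p * (c * Real.exp (-β * p ^ 2 / 2)) := by
    intro f bnd hIf hIb hle
    have hGn : ∀ p : ℝ, 0 ≤ c * Real.exp (-β * p ^ 2 / 2) :=
      fun p => mul_nonneg hc (Real.exp_pos _).le
    have h0 : ‖∫ p, f p * (c * Real.exp (-β * p ^ 2 / 2))‖
        ≤ ∫ p, ‖f p * (c * Real.exp (-β * p ^ 2 / 2))‖ := norm_integral_le_integral_norm _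
    rw [Real.norm_eq_abs] at h0
    calc |∫ p, f p * (c * Real.exp (-β * p ^ 2 / 2))|
        ≤ ∫ p, ‖f p * (c * Real.exp (-β * p ^ 2 / 2))‖ := h0
      _ ≤ ∫ p, bnd p * (c * Real.exp (-β * p ^ 2 / 2)) := by
          refine integral_mono hIf.norm hIb fun p => ?_
          rw [Real.norm_eq_abs, abs_mul, abs_of_nonneg (hGn p)]
          exact mul_le_mul_of_nonneg_right (hle p) (hGn p)
  -- the K integrals
  set K0 : ℝ := ∫ p, c * Real.exp (-β * p ^ 2 / 2) with hK0
  set K1 : ℝ := ∫ p, (1 + |p|) ^ 1 * (c * Real.exp (-β * p ^ 2 / 2)) with hK1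
  set K2 : ℝ := ∫ p, (1 + |p|) ^ 2 * (c * Real.exp (-β * p ^ 2 / 2)) with hK2
  set K3 : ℝ := ∫ p, (1 + |p|) ^ 3 * (c * Real.exp (-β * p ^ 2 / 2)) with hK3
  have hK1n : 0 ≤ K1 := integral_nonneg fun p => by positivity
  have hK2n : 0 ≤ K2 := integral_nonneg fun p => by positivity
  have hK3n : 0 ≤ K3 := integral_nonneg fun p => by positivity
  -- integration by parts identities
  have hB0 := gauss_ibp hβ hc hgd hg1.continuous hM0 hM1
  have hC0 := gauss_ibp hβ hc hg1d hg2.continuous hM1 hM2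
  -- the constant
  refine ⟨β / 2 * M2 * K1 + β ^ 2 / 8 * M2 * K2 + M3 * (1 + β / 2) ^ 3 * K3, ?_, ?_⟩
  · have t1 : 0 ≤ β / 2 * M2 * K1 := by positivity
    have t2 : 0 ≤ β ^ 2 / 8 * M2 * K2 := by positivity
    have t3 : 0 ≤ M3 * (1 + β / 2) ^ 3 * K3 := by positivity
    linarith
  intro η hη
  set R : ℝ → ℝ := fun p => g (p + η - η ^ 2 * β * p / 2) - g p
      - (η - η ^ 2 * β * p / 2) * deriv g p
      - (η - η ^ 2 * β * p / 2) ^ 2 / 2 * deriv (deriv g) p with hRdef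
  have hRb : ∀ p, |R p| ≤ M3 * |η| ^ 3 * (1 + β / 2) ^ 3 * (1 + |p|) ^ 3 := by
    intro p
    have harg : p + (η - η ^ 2 * β * p / 2) = p + η - η ^ 2 * β * p / 2 := by ring
    have ht := taylor_two hgd hg1d hg2d hM3 p (η - η ^ 2 * β * p / 2)
    rw [harg] at ht
    have h1 : |η - η ^ 2 * β * p / 2| ≤ |η| * ((1 + β / 2) * (1 + |p|)) := by
      have e1 : |η - η ^ 2 * β * p / 2| ≤ |η| + η ^ 2 * β * |p| / 2 := by
        have := abs_sub (η) (η ^ 2 * β * p / 2)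
        have h2 : |η ^ 2 * β * p / 2| = η ^ 2 * β * |p| / 2 := by
          rw [abs_div, abs_mul, abs_mul, abs_pow, sq_abs, abs_of_pos hβ]
          norm_num
        calc |η - η ^ 2 * β * p / 2| ≤ |η| + |η ^ 2 * β * p / 2| := abs_sub _ _
          _ = |η| + η ^ 2 * β * |p| / 2 := by rw [h2]
      have e2 : η ^ 2 ≤ |η| := by
        rw [← sq_abs]
        nlinarith [abs_nonneg η]
      have e3 : η ^ 2 * β * |p| / 2 ≤ |η| * (β * |p| / 2) := by
        have := mul_le_mul_of_nonneg_right e2 (by positivity : 0 ≤ β * |p| / 2)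
        linarith [this]
      have e4 : |η| + |η| * (β * |p| / 2) = |η| * (1 + β * |p| / 2) := by ring
      have e5 : 1 + β * |p| / 2 ≤ (1 + β / 2) * (1 + |p|) := by nlinarith [abs_nonneg p]
      calc |η - η ^ 2 * β * p / 2| ≤ |η| + η ^ 2 * β * |p| / 2 := e1
        _ ≤ |η| + |η| * (β * |p| / 2) := by linarith
        _ = |η| * (1 + β * |p| / 2) := e4
        _ ≤ |η| * ((1 + β / 2) * (1 + |p|)) :=
            mul_le_mul_of_nonneg_left e5 (abs_nonneg η)
    have h3 : |η - η ^ 2 * β * p / 2| ^ 3 ≤ (|η| * ((1 + β / 2) * (1 + |p|))) ^ 3 :=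
      pow_le_pow_left₀ (abs_nonneg _) h1 3
    calc |R p| ≤ M3 * |η - η ^ 2 * β * p / 2| ^ 3 := ht
      _ ≤ M3 * (|η| * ((1 + β / 2) * (1 + |p|))) ^ 3 :=
          mul_le_mul_of_nonneg_left h3 hM3n
      _ = M3 * |η| ^ 3 * (1 + β / 2) ^ 3 * (1 + |p|) ^ 3 := by ring
  have hRc : Continuous R := by
    have h1 : Continuous fun p : ℝ => g (p + η - η ^ 2 * β * p / 2) :=
      hgi.continuous.comp (by continuity)
    have h2 : Continuous fun p : ℝ => (η - η ^ 2 * β * p / 2) * deriv g p :=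
      (by continuity : Continuous fun p : ℝ => η - η ^ 2 * β * p / 2).mul hg1.continuous
    have h3 : Continuous fun p : ℝ => (η - η ^ 2 * β * p / 2) ^ 2 / 2 * deriv (deriv g) p :=
      (by continuity : Continuous fun p : ℝ => (η - η ^ 2 * β * p / 2) ^ 2 / 2).mul hg2.continuous
    exact ((h1.sub hgi.continuous).sub h2).sub h3
  have hIR : Integrable fun p => R p * (c * Real.exp (-β * p ^ 2 / 2)) := by
    refine gauss_integrable hβ c hRc (M3 * |η| ^ 3 * (1 + β / 2) ^ 3) 3 fun p => ?_
    exact hRb p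
  -- splitting of the two integrals
  have hsplit : (∫ p, g (p + η - η ^ 2 * β * p / 2) * (c * Real.exp (-β * p ^ 2 / 2)))
      = (∫ p, g p * (c * Real.exp (-β * p ^ 2 / 2)))
        + η * (∫ p, deriv g p * (c * Real.exp (-β * p ^ 2 / 2)))
        - η ^ 2 * β / 2 * (∫ p, p * deriv g p * (c * Real.exp (-β * p ^ 2 / 2)))
        + η ^ 2 / 2 * (∫ p, deriv (deriv g) p * (c * Real.exp (-β * p ^ 2 / 2)))
        - η ^ 3 * β / 2 * (∫ p, p * deriv (deriv g) p * (c * Real.exp (-β * p ^ 2 / 2)))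
        + η ^ 4 * β ^ 2 / 8 * (∫ p, p ^ 2 * deriv (deriv g) p * (c * Real.exp (-β * p ^ 2 / 2)))
        + (∫ p, R p * (c * Real.exp (-β * p ^ 2 / 2))) := by
    have hfe : (fun p => g (p + η - η ^ 2 * β * p / 2) * (c * Real.exp (-β * p ^ 2 / 2)))
        = fun p => g p * (c * Real.exp (-β * p ^ 2 / 2))
            + η * (deriv g p * (c * Real.exp (-β * p ^ 2 / 2)))
            - η ^ 2 * β / 2 * (p * deriv g p * (c * Real.exp (-β * p ^ 2 / 2)))
            + η ^ 2 / 2 * (deriv (deriv g) p * (c * Real.exp (-β * p ^ 2 / 2)))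
            - η ^ 3 * β / 2 * (p * deriv (deriv g) p * (c * Real.exp (-β * p ^ 2 / 2)))
            + η ^ 4 * β ^ 2 / 8 * (p ^ 2 * deriv (deriv g) p * (c * Real.exp (-β * p ^ 2 / 2)))
            + R p * (c * Real.exp (-β * p ^ 2 / 2)) := by
      funext p
      simp only [hRdef]
      ring
    have I2 : Integrable (fun p => g p * (c * Real.exp (-β * p ^ 2 / 2))
        + η * (deriv g p * (c * Real.exp (-β * p ^ 2 / 2)))) :=
      hIg.add (hIg1.const_mul η)
    have I3 : Integrable (fun p => g p * (c * Real.exp (-β * p ^ 2 / 2))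
        + η * (deriv g p * (c * Real.exp (-β * p ^ 2 / 2)))
        - η ^ 2 * β / 2 * (p * deriv g p * (c * Real.exp (-β * p ^ 2 / 2)))) :=
      I2.sub (hIpg1.const_mul (η ^ 2 * β / 2))
    have I4 : Integrable (fun p => g p * (c * Real.exp (-β * p ^ 2 / 2))
        + η * (deriv g p * (c * Real.exp (-β * p ^ 2 / 2)))
        - η ^ 2 * β / 2 * (p * deriv g p * (c * Real.exp (-β * p ^ 2 / 2)))
        + η ^ 2 / 2 * (deriv (deriv g) p * (c * Real.exp (-β * p ^ 2 / 2)))) :=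
      I3.add (hIg2.const_mul (η ^ 2 / 2))
    have I5 : Integrable (fun p => g p * (c * Real.exp (-β * p ^ 2 / 2))
        + η * (deriv g p * (c * Real.exp (-β * p ^ 2 / 2)))
        - η ^ 2 * β / 2 * (p * deriv g p * (c * Real.exp (-β * p ^ 2 / 2)))
        + η ^ 2 / 2 * (deriv (deriv g) p * (c * Real.exp (-β * p ^ 2 / 2)))
        - η ^ 3 * β / 2 * (p * deriv (deriv g) p * (c * Real.exp (-β * p ^ 2 / 2)))) :=
      I4.sub (hIpg2.const_mul (η ^ 3 * β / 2))
    have I6 : Integrable (fun p => g p * (c * Real.exp (-β * p ^ 2 / 2))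
        + η * (deriv g p * (c * Real.exp (-β * p ^ 2 / 2)))
        - η ^ 2 * β / 2 * (p * deriv g p * (c * Real.exp (-β * p ^ 2 / 2)))
        + η ^ 2 / 2 * (deriv (deriv g) p * (c * Real.exp (-β * p ^ 2 / 2)))
        - η ^ 3 * β / 2 * (p * deriv (deriv g) p * (c * Real.exp (-β * p ^ 2 / 2)))
        + η ^ 4 * β ^ 2 / 8 * (p ^ 2 * deriv (deriv g) p * (c * Real.exp (-β * p ^ 2 / 2)))) :=
      I5.add (hIp2g2.const_mul (η ^ 4 * β ^ 2 / 8))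
    rw [hfe, integral_add I6 hIR,
      integral_add I5 (hIp2g2.const_mul (η ^ 4 * β ^ 2 / 8)),
      integral_sub I4 (hIpg2.const_mul (η ^ 3 * β / 2)),
      integral_add I3 (hIg2.const_mul (η ^ 2 / 2)),
      integral_sub I2 (hIpg1.const_mul (η ^ 2 * β / 2)),
      integral_add hIg (hIg1.const_mul η),
      integral_const_mul, integral_const_mul, integral_const_mul, integral_const_mul,
      integral_const_mul]
  have hsplit2 : (∫ p, g p * (1 + η * β * p) * (c * Real.exp (-β * p ^ 2 / 2)))
      = (∫ p, g p * (c * Real.exp (-β * p ^ 2 / 2)))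
        + η * β * (∫ p, p * g p * (c * Real.exp (-β * p ^ 2 / 2))) := by
    have hfe : (fun p => g p * (1 + η * β * p) * (c * Real.exp (-β * p ^ 2 / 2)))
        = fun p => g p * (c * Real.exp (-β * p ^ 2 / 2))
            + η * β * (p * g p * (c * Real.exp (-β * p ^ 2 / 2))) := by
      funext p; ring
    rw [hfe, integral_add hIg (hIpg.const_mul (η * β)), integral_const_mul]
  have hD : (∫ p, g (p + η - η ^ 2 * β * p / 2) * (c * Real.exp (-β * p ^ 2 / 2)))
      - (∫ p, g p * (1 + η * β * p) * (c * Real.exp (-β * p ^ 2 / 2)))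
      = η ^ 3 * (-(β / 2) * (∫ p, p * deriv (deriv g) p * (c * Real.exp (-β * p ^ 2 / 2))))
        + η ^ 4 * (β ^ 2 / 8 * (∫ p, p ^ 2 * deriv (deriv g) p * (c * Real.exp (-β * p ^ 2 / 2))))
        + (∫ p, R p * (c * Real.exp (-β * p ^ 2 / 2))) := by
    rw [hsplit, hsplit2, hB0, hC0]
    ring
  -- bounds on the three pieces
  have hb1 : |∫ p, p * deriv (deriv g) p * (c * Real.exp (-β * p ^ 2 / 2))| ≤ M2 * K1 := by
    have h := hbound (fun p => p * deriv (deriv g) p) (fun p => M2 * (1 + |p|) ^ 1)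
      hIpg2 (by
        have : (fun p : ℝ => M2 * (1 + |p|) ^ 1 * (c * Real.exp (-β * p ^ 2 / 2)))
            = fun p : ℝ => M2 * ((1 + |p|) ^ 1 * (c * Real.exp (-β * p ^ 2 / 2))) := by
          funext p; ring
        rw [this]
        exact (hIk 1).const_mul M2)
      (fun p => by
        show |p * deriv (deriv g) p| ≤ M2 * (1 + |p|) ^ 1
        rw [abs_mul, pow_one]
        nlinarith [abs_nonneg p, mul_le_mul_of_nonneg_left (hM2 p) (abs_nonneg p)])
    have heq : (∫ p, M2 * (1 + |p|) ^ 1 * (c * Real.exp (-β * p ^ 2 / 2))) = M2 * K1 := by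
      have : (fun p : ℝ => M2 * (1 + |p|) ^ 1 * (c * Real.exp (-β * p ^ 2 / 2)))
          = fun p : ℝ => M2 * ((1 + |p|) ^ 1 * (c * Real.exp (-β * p ^ 2 / 2))) := by
        funext p; ring
      rw [this, integral_const_mul, hK1]
    rw [heq] at h
    exact h
  have hb2 : |∫ p, p ^ 2 * deriv (deriv g) p * (c * Real.exp (-β * p ^ 2 / 2))| ≤ M2 * K2 := by
    have h := hbound (fun p => p ^ 2 * deriv (deriv g) p) (fun p => M2 * (1 + |p|) ^ 2)
      hIp2g2 (by
        have : (fun p : ℝ => M2 * (1 + |p|) ^ 2 * (c * Real.exp (-β * p ^ 2 / 2)))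
            = fun p : ℝ => M2 * ((1 + |p|) ^ 2 * (c * Real.exp (-β * p ^ 2 / 2))) := by
          funext p; ring
        rw [this]
        exact (hIk 2).const_mul M2)
      (fun p => by
        show |p ^ 2 * deriv (deriv g) p| ≤ M2 * (1 + |p|) ^ 2
        rw [abs_mul]
        have h2 : |p| ^ 2 ≤ (1 + |p|) ^ 2 := by nlinarith [abs_nonneg p]
        calc |p ^ 2| * |deriv (deriv g) p| ≤ |p ^ 2| * M2 :=
              mul_le_mul_of_nonneg_left (hM2 p) (abs_nonneg _)
          _ = M2 * |p| ^ 2 := by rw [abs_pow]; ring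
          _ ≤ M2 * (1 + |p|) ^ 2 := mul_le_mul_of_nonneg_left h2 hM2n)
    have heq : (∫ p, M2 * (1 + |p|) ^ 2 * (c * Real.exp (-β * p ^ 2 / 2))) = M2 * K2 := by
      have : (fun p : ℝ => M2 * (1 + |p|) ^ 2 * (c * Real.exp (-β * p ^ 2 / 2)))
          = fun p : ℝ => M2 * ((1 + |p|) ^ 2 * (c * Real.exp (-β * p ^ 2 / 2))) := by
        funext p; ring
      rw [this, integral_const_mul, hK2]
    rw [heq] at h
    exact h
  have hb3 : |∫ p, R p * (c * Real.exp (-β * p ^ 2 / 2))|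
      ≤ M3 * |η| ^ 3 * (1 + β / 2) ^ 3 * K3 := by
    have h := hbound R (fun p => M3 * |η| ^ 3 * (1 + β / 2) ^ 3 * (1 + |p|) ^ 3)
      hIR (by
        have : (fun p : ℝ => M3 * |η| ^ 3 * (1 + β / 2) ^ 3 * (1 + |p|) ^ 3
              * (c * Real.exp (-β * p ^ 2 / 2)))
            = fun p : ℝ => (M3 * |η| ^ 3 * (1 + β / 2) ^ 3)
              * ((1 + |p|) ^ 3 * (c * Real.exp (-β * p ^ 2 / 2))) := by
          funext p; ring
        rw [this]
        exact (hIk 3).const_mul _) hRb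
    have heq : (∫ p, M3 * |η| ^ 3 * (1 + β / 2) ^ 3 * (1 + |p|) ^ 3
          * (c * Real.exp (-β * p ^ 2 / 2)))
        = M3 * |η| ^ 3 * (1 + β / 2) ^ 3 * K3 := by
      have : (fun p : ℝ => M3 * |η| ^ 3 * (1 + β / 2) ^ 3 * (1 + |p|) ^ 3
            * (c * Real.exp (-β * p ^ 2 / 2)))
          = fun p : ℝ => (M3 * |η| ^ 3 * (1 + β / 2) ^ 3)
            * ((1 + |p|) ^ 3 * (c * Real.exp (-β * p ^ 2 / 2))) := by
        funext p; ring
      rw [this, integral_const_mul, hK3]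
    rw [heq] at h
    exact h
  -- assemble
  rw [hD]
  have habs : ∀ a b d : ℝ, |a + b + d| ≤ |a| + |b| + |d| := fun a b d =>
    (abs_add_le _ _).trans (add_le_add (abs_add_le a b) le_rfl)
  have hη4 : |η| ^ 4 ≤ |η| ^ 3 := pow_le_pow_of_le_one (abs_nonneg η) hη (by norm_num)
  have e1 : |η ^ 3 * (-(β / 2) * (∫ p, p * deriv (deriv g) p * (c * Real.exp (-β * p ^ 2 / 2))))|
      ≤ β / 2 * M2 * K1 * |η| ^ 3 := by
    rw [abs_mul, abs_pow, abs_mul, abs_neg, abs_of_pos (by positivity : (0:ℝ) < β / 2)]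
    calc |η| ^ 3 * (β / 2 * |∫ p, p * deriv (deriv g) p * (c * Real.exp (-β * p ^ 2 / 2))|)
        ≤ |η| ^ 3 * (β / 2 * (M2 * K1)) := by
          apply mul_le_mul_of_nonneg_left _ (pow_nonneg (abs_nonneg η) 3)
          apply mul_le_mul_of_nonneg_left hb1 (by positivity)
      _ = β / 2 * M2 * K1 * |η| ^ 3 := by ring
  have e2 : |η ^ 4 * (β ^ 2 / 8 * (∫ p, p ^ 2 * deriv (deriv g) p * (c * Real.exp (-β * p ^ 2 / 2))))|
      ≤ β ^ 2 / 8 * M2 * K2 * |η| ^ 3 := by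
    rw [abs_mul, abs_pow, abs_mul, abs_of_pos (by positivity : (0:ℝ) < β ^ 2 / 8)]
    calc |η| ^ 4 * (β ^ 2 / 8 * |∫ p, p ^ 2 * deriv (deriv g) p * (c * Real.exp (-β * p ^ 2 / 2))|)
        ≤ |η| ^ 4 * (β ^ 2 / 8 * (M2 * K2)) := by
          apply mul_le_mul_of_nonneg_left _ (pow_nonneg (abs_nonneg η) 4)
          apply mul_le_mul_of_nonneg_left hb2 (by positivity)
      _ = (β ^ 2 / 8 * (M2 * K2)) * |η| ^ 4 := by ring
      _ ≤ (β ^ 2 / 8 * (M2 * K2)) * |η| ^ 3 := by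
          apply mul_le_mul_of_nonneg_left hη4 (by positivity)
      _ = β ^ 2 / 8 * M2 * K2 * |η| ^ 3 := by ring
  have e3 : |∫ p, R p * (c * Real.exp (-β * p ^ 2 / 2))|
      ≤ M3 * (1 + β / 2) ^ 3 * K3 * |η| ^ 3 := by
    calc |∫ p, R p * (c * Real.exp (-β * p ^ 2 / 2))|
        ≤ M3 * |η| ^ 3 * (1 + β / 2) ^ 3 * K3 := hb3
      _ = M3 * (1 + β / 2) ^ 3 * K3 * |η| ^ 3 := by ring
  calc |η ^ 3 * (-(β / 2) * (∫ p, p * deriv (deriv g) p * (c * Real.exp (-β * p ^ 2 / 2))))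
        + η ^ 4 * (β ^ 2 / 8 * (∫ p, p ^ 2 * deriv (deriv g) p * (c * Real.exp (-β * p ^ 2 / 2))))
        + (∫ p, R p * (c * Real.exp (-β * p ^ 2 / 2)))|
      ≤ |η ^ 3 * (-(β / 2) * (∫ p, p * deriv (deriv g) p * (c * Real.exp (-β * p ^ 2 / 2))))|
        + |η ^ 4 * (β ^ 2 / 8 * (∫ p, p ^ 2 * deriv (deriv g) p * (c * Real.exp (-β * p ^ 2 / 2))))|
        + |∫ p, R p * (c * Real.exp (-β * p ^ 2 / 2))| := habs _ _ _
    _ ≤ β / 2 * M2 * K1 * |η| ^ 3 + β ^ 2 / 8 * M2 * K2 * |η| ^ 3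
        + M3 * (1 + β / 2) ^ 3 * K3 * |η| ^ 3 := by linarith
    _ = (β / 2 * M2 * K1 + β ^ 2 / 8 * M2 * K2 + M3 * (1 + β / 2) ^ 3 * K3) * |η| ^ 3 := by ring

lemma main_two {β : ℝ} (hβ : 0 < β) {c : ℝ} (hc : 0 ≤ c) {g : ℝ → ℝ}
    (hg : ContDiff ℝ (⊤ : ℕ∞) g) {M0 M1 M2 : ℝ}
    (hM0 : ∀ p, |g p| ≤ M0) (hM1 : ∀ p, |deriv g p| ≤ M1)
    (hM2 : ∀ p, |deriv (deriv g) p| ≤ M2) :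
    ∃ C : ℝ, 0 ≤ C ∧ ∀ η : ℝ, |η| ≤ 1 →
      |(∫ p, g (p + η) * (c * Real.exp (-β * p ^ 2 / 2)))
        - ∫ p, g p * (1 + η * β * p) * (c * Real.exp (-β * p ^ 2 / 2))| ≤ C * η ^ 2 := by
  have hgi : ContDiff ℝ ((⊤ : ℕ∞) : WithTop ℕ∞) g := hg.of_le (by simp)
  have hgd : Differentiable ℝ g := hgi.differentiable (by norm_num)
  have hg1 : ContDiff ℝ ((⊤ : ℕ∞) : WithTop ℕ∞) (deriv g) := (contDiff_infty_iff_deriv.mp hgi).2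
  have hg1d : Differentiable ℝ (deriv g) := hg1.differentiable (by norm_num)
  have hM0n : 0 ≤ M0 := le_trans (abs_nonneg _) (hM0 0)
  have hM2n : 0 ≤ M2 := le_trans (abs_nonneg _) (hM2 0)
  have hIg : Integrable fun p => g p * (c * Real.exp (-β * p ^ 2 / 2)) :=
    gauss_integrable hβ c hgi.continuous M0 0 fun p => by simpa using hM0 p
  have hIpg : Integrable fun p => p * g p * (c * Real.exp (-β * p ^ 2 / 2)) := by
    refine gauss_integrable hβ c (continuous_id.mul hgi.continuous) M0 1 fun p => ?_
    rw [abs_mul, pow_one]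
    nlinarith [abs_nonneg p, mul_le_mul_of_nonneg_left (hM0 p) (abs_nonneg p)]
  have hIg1 : Integrable fun p => deriv g p * (c * Real.exp (-β * p ^ 2 / 2)) :=
    gauss_integrable hβ c hg1.continuous M1 0 fun p => by simpa using hM1 p
  have hIone : Integrable fun p : ℝ => c * Real.exp (-β * p ^ 2 / 2) := by
    have h := gauss_integrable hβ c (continuous_const : Continuous fun _ : ℝ => (1:ℝ)) 1 0
      (fun p => by norm_num)
    refine h.congr (Filter.Eventually.of_forall fun p => ?_)
    ring
  have hK0n : 0 ≤ ∫ p : ℝ, c * Real.exp (-β * p ^ 2 / 2) :=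
    integral_nonneg fun p => by positivity
  have hB0 := gauss_ibp hβ hc hgd hg1.continuous hM0 hM1
  refine ⟨M2 * ∫ p : ℝ, c * Real.exp (-β * p ^ 2 / 2), mul_nonneg hM2n hK0n, fun η hη => ?_⟩
  set R : ℝ → ℝ := fun p => g (p + η) - g p - η * deriv g p with hRdef
  have hRb : ∀ p, |R p| ≤ M2 * η ^ 2 := fun p => taylor_one hgd hg1d hM2 p η
  have hRc : Continuous R := by
    have h1 : Continuous fun p : ℝ => g (p + η) := hgi.continuous.comp (by continuity)
    exact (h1.sub hgi.continuous).sub (continuous_const.mul hg1.continuous)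
  have hIR : Integrable fun p => R p * (c * Real.exp (-β * p ^ 2 / 2)) := by
    refine gauss_integrable hβ c hRc (M2 * η ^ 2) 0 fun p => by simpa using hRb p
  have hsplit : (∫ p, g (p + η) * (c * Real.exp (-β * p ^ 2 / 2)))
      = (∫ p, g p * (c * Real.exp (-β * p ^ 2 / 2)))
        + η * (∫ p, deriv g p * (c * Real.exp (-β * p ^ 2 / 2)))
        + (∫ p, R p * (c * Real.exp (-β * p ^ 2 / 2))) := by
    have hfe : (fun p => g (p + η) * (c * Real.exp (-β * p ^ 2 / 2)))
        = fun p => g p * (c * Real.exp (-β * p ^ 2 / 2))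
            + η * (deriv g p * (c * Real.exp (-β * p ^ 2 / 2)))
            + R p * (c * Real.exp (-β * p ^ 2 / 2)) := by
      funext p
      simp only [hRdef]
      ring
    have I2 : Integrable (fun p => g p * (c * Real.exp (-β * p ^ 2 / 2))
        + η * (deriv g p * (c * Real.exp (-β * p ^ 2 / 2)))) :=
      hIg.add (hIg1.const_mul η)
    rw [hfe, integral_add I2 hIR, integral_add hIg (hIg1.const_mul η), integral_const_mul]
  have hsplit2 : (∫ p, g p * (1 + η * β * p) * (c * Real.exp (-β * p ^ 2 / 2)))
      = (∫ p, g p * (c * Real.exp (-β * p ^ 2 / 2)))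
        + η * β * (∫ p, p * g p * (c * Real.exp (-β * p ^ 2 / 2))) := by
    have hfe : (fun p => g p * (1 + η * β * p) * (c * Real.exp (-β * p ^ 2 / 2)))
        = fun p => g p * (c * Real.exp (-β * p ^ 2 / 2))
            + η * β * (p * g p * (c * Real.exp (-β * p ^ 2 / 2))) := by
      funext p; ring
    rw [hfe, integral_add hIg (hIpg.const_mul (η * β)), integral_const_mul]
  have hD : (∫ p, g (p + η) * (c * Real.exp (-β * p ^ 2 / 2)))
      - (∫ p, g p * (1 + η * β * p) * (c * Real.exp (-β * p ^ 2 / 2)))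
      = ∫ p, R p * (c * Real.exp (-β * p ^ 2 / 2)) := by
    rw [hsplit, hsplit2, hB0]
    ring
  rw [hD]
  have hGn : ∀ p : ℝ, 0 ≤ c * Real.exp (-β * p ^ 2 / 2) :=
    fun p => mul_nonneg hc (Real.exp_pos _).le
  have hIbnd : Integrable fun p : ℝ => M2 * η ^ 2 * (c * Real.exp (-β * p ^ 2 / 2)) :=
    hIone.const_mul (M2 * η ^ 2)
  have h0 : ‖∫ p, R p * (c * Real.exp (-β * p ^ 2 / 2))‖
      ≤ ∫ p, ‖R p * (c * Real.exp (-β * p ^ 2 / 2))‖ := norm_integral_le_integral_norm _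
  rw [Real.norm_eq_abs] at h0
  calc |∫ p, R p * (c * Real.exp (-β * p ^ 2 / 2))|
      ≤ ∫ p, ‖R p * (c * Real.exp (-β * p ^ 2 / 2))‖ := h0
    _ ≤ ∫ p, M2 * η ^ 2 * (c * Real.exp (-β * p ^ 2 / 2)) := by
        refine integral_mono (hIR.norm) hIbnd fun p => ?_
        rw [Real.norm_eq_abs, abs_mul, abs_of_nonneg (hGn p)]
        exact mul_le_mul_of_nonneg_right (hRb p) (hGn p)
    _ = M2 * η ^ 2 * ∫ p : ℝ, c * Real.exp (-β * p ^ 2 / 2) := integral_const_mul _ _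
    _ = (M2 * ∫ p : ℝ, c * Real.exp (-β * p ^ 2 / 2)) * η ^ 2 := by ring

/-- Momentum-marginal finite-`η` bias: for the Gaussian `γ(p) = √(β/2π) e^{-βp²/2}` and
bounded smooth `g`, the pushforwards by the first-order map `p ↦ p + η` and the
second-order map `p ↦ p + η - η²βp/2` both agree with the linear-response perturbation
`(1 + ηβp)γ` up to `O(η²)`; the second-order map improves the remainder to `O(η³)`
when `g` has bounded third derivative. -/
theorem stmt15 (β : ℝ) (hβ : 0 < β) (γ : ℝ → ℝ)
    (hγ : ∀ p, γ p = Real.sqrt (β / (2 * Real.pi)) * Real.exp (-β * p ^ 2 / 2))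
    (g : ℝ → ℝ) (hg : ContDiff ℝ (⊤ : ℕ∞) g)
    (hgb : ∀ n : ℕ, ∃ C : ℝ, ∀ p, |iteratedDeriv n g p| ≤ C) :
    -- second-order map, O(η²)
    (∃ C : ℝ, 0 ≤ C ∧ ∀ η : ℝ, |η| ≤ 1 →
      |(∫ p, g (p + η - η ^ 2 * β * p / 2) * γ p) - ∫ p, g p * (1 + η * β * p) * γ p|
        ≤ C * η ^ 2) ∧
    -- first-order map, O(η²)
    (∃ C : ℝ, 0 ≤ C ∧ ∀ η : ℝ, |η| ≤ 1 →
      |(∫ p, g (p + η) * γ p) - ∫ p, g p * (1 + η * β * p) * γ p| ≤ C * η ^ 2) ∧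
    -- second-order map, O(η³) (using the bounded third derivative of `g`)
    (∃ C : ℝ, 0 ≤ C ∧ ∀ η : ℝ, |η| ≤ 1 →
      |(∫ p, g (p + η - η ^ 2 * β * p / 2) * γ p) - ∫ p, g p * (1 + η * β * p) * γ p|
        ≤ C * |η| ^ 3) := by
  simp only [hγ]
  obtain ⟨M0, hM0⟩ := hgb 0
  obtain ⟨M1, hM1⟩ := hgb 1
  obtain ⟨M2, hM2⟩ := hgb 2
  obtain ⟨M3, hM3⟩ := hgb 3
  have e2 : iteratedDeriv 2 g = deriv (deriv g) := by
    rw [show (2:ℕ) = 1 + 1 from rfl, iteratedDeriv_succ, iteratedDeriv_one]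
  have e3 : iteratedDeriv 3 g = deriv (deriv (deriv g)) := by
    rw [show (3:ℕ) = 2 + 1 from rfl, iteratedDeriv_succ, e2]
  have hM0' : ∀ p, |g p| ≤ M0 := fun p => by
    simpa [iteratedDeriv_zero] using hM0 p
  have hM1' : ∀ p, |deriv g p| ≤ M1 := fun p => by
    simpa [iteratedDeriv_one] using hM1 p
  have hM2' : ∀ p, |deriv (deriv g) p| ≤ M2 := fun p => by
    have := hM2 p; rwa [e2] at this
  have hM3' : ∀ p, |deriv (deriv (deriv g)) p| ≤ M3 := fun p => by
    have := hM3 p; rwa [e3] at this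
  have hc : (0:ℝ) ≤ Real.sqrt (β / (2 * Real.pi)) := Real.sqrt_nonneg _
  obtain ⟨C3, hC3n, hC3⟩ := main_three hβ hc hg hM0' hM1' hM2' hM3'
  obtain ⟨C2, hC2n, hC2⟩ := main_two hβ hc hg hM0' hM1' hM2'
  refine ⟨⟨C3, hC3n, fun η hη => ?_⟩, ⟨C2, hC2n, hC2⟩, ⟨C3, hC3n, hC3⟩⟩
  have h1 := hC3 η hη
  have h2 : |η| ^ 3 ≤ η ^ 2 := by
    have := pow_le_pow_of_le_one (abs_nonneg η) hη (show 2 ≤ 3 by norm_num)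
    calc |η| ^ 3 ≤ |η| ^ 2 := this
      _ = η ^ 2 := sq_abs η
  calc |(∫ p, g (p + η - η ^ 2 * β * p / 2)
          * (Real.sqrt (β / (2 * Real.pi)) * Real.exp (-β * p ^ 2 / 2)))
        - ∫ p, g p * (1 + η * β * p)
          * (Real.sqrt (β / (2 * Real.pi)) * Real.exp (-β * p ^ 2 / 2))|
      ≤ C3 * |η| ^ 3 := h1
    _ ≤ C3 * η ^ 2 := mul_le_mul_of_nonneg_left h2 hC3n
end
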